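/- Sprague-Grundy theorem: every position of a finite impartial game under normal play is indistinguishable from some Nim-heap; i.e., for every impartial game G there exists n such that for all impartial games H, the outcome of G + H equals the outcome of (Nim-heap of size n) + H. -/

import Mathlib

universe u

namespace SetTheory

/-- Pre-games (as in the combinatorial game theory of older Mathlib). -/
inductive PGame : Type (u + 1)
  | mk : ∀ α β : Type u, (α → PGame) → (β → PGame) → PGame

namespace PGame

/-- The pair (`x ≤ y`, `x ⧏ y`), defined by simultaneous recursion. -/
noncomputable def leLF (x : PGame.{u}) : PGame.{u} → Prop × Prop := by
  induction x with
  | mk xl xr xL xR IHxl IHxr =>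
    intro y
    induction y with
    | mk yl yr yL yR IHyl IHyr =>
      exact ((∀ i, (IHxl i (mk yl yr yL yR)).2) ∧ ∀ j, (IHyr j).2,
        (∃ i, (IHyl i).1) ∨ ∃ j, (IHxr j (mk yl yr yL yR)).1)

noncomputable instance : LE PGame.{u} :=
  ⟨fun x y => (leLF x y).1⟩

/-- Equivalence of pre-games: `x ≤ y ∧ y ≤ x`. -/
def Equiv (x y : PGame.{u}) : Prop :=
  x ≤ y ∧ y ≤ x

instance : HasEquiv PGame.{u} :=
  ⟨Equiv⟩

instance : Zero PGame.{u} :=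
  ⟨⟨PEmpty, PEmpty, PEmpty.elim, PEmpty.elim⟩⟩

/-- Negation of a pre-game. -/
def neg : PGame.{u} → PGame.{u}
  | ⟨l, r, L, R⟩ => ⟨r, l, fun i => neg (R i), fun i => neg (L i)⟩

instance : Neg PGame.{u} :=
  ⟨neg⟩

/-- Sum of pre-games. -/
noncomputable def add (x : PGame.{u}) : PGame.{u} → PGame.{u} := by
  induction x with
  | mk xl xr xL xR IHxl IHxr =>
    intro y
    induction y with
    | mk yl yr yL yR IHyl IHyr =>
      exact ⟨xl ⊕ yl, xr ⊕ yr, Sum.rec (fun i => IHxl i (mk yl yr yL yR)) IHyl,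
        Sum.rec (fun i => IHxr i (mk yl yr yL yR)) IHyr⟩

noncomputable instance : Add PGame.{u} :=
  ⟨add⟩

/-- Auxiliary definition for impartiality. -/
def ImpartialAux (G : PGame.{u}) : Prop := by
  induction G with
  | mk l r L R IHl IHr => exact (mk l r L R ≈ -mk l r L R) ∧ (∀ i, IHl i) ∧ ∀ j, IHr j

/-- A pre-game is impartial if it is equivalent to its negative, hereditarily. -/
class Impartial (G : PGame.{u}) : Prop where
  out : ImpartialAux G

/-- A short pre-game: finitely many positions, hereditarily. -/
class inductive Short : PGame.{u} → Type (u + 1)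
  | mk :
    ∀ {α β : Type u} {L : α → PGame.{u}} {R : β → PGame.{u}} (_ : ∀ i : α, Short (L i))
      (_ : ∀ j : β, Short (R j)) [Fintype α] [Fintype β] [DecidableEq α] [DecidableEq β],
      Short ⟨α, β, L, R⟩

/-- The nim game of an ordinal `o`: moves to `nim o'` for every `o' < o`. -/
noncomputable def nim (o : Ordinal.{u}) : PGame.{u} :=
  ⟨o.ToType, o.ToType,
    fun x => nim (Ordinal.ToType.mk.symm x).val,
    fun x => nim (Ordinal.ToType.mk.symm x).val⟩
termination_by o
decreasing_by all_goals exact (Ordinal.ToType.mk.symm x).prop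

end PGame

end SetTheory

open SetTheory PGame

namespace SetTheory.PGame

def sgLF (x y : PGame.{u}) : Prop := (leLF x y).2

def sgLeftMoves : PGame.{u} → Type u
  | mk l _ _ _ => l

def sgRightMoves : PGame.{u} → Type u
  | mk _ r _ _ => r

def sgMoveLeft : (x : PGame.{u}) → sgLeftMoves x → PGame.{u}
  | mk _ _ L _ => L

def sgMoveRight : (x : PGame.{u}) → sgRightMoves x → PGame.{u}
  | mk _ _ _ R => R

theorem sg_le_def (x y : PGame.{u}) :
    x ≤ y ↔ (∀ i, sgLF (sgMoveLeft x i) y) ∧ ∀ j, sgLF x (sgMoveRight y j) := by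
  cases x; cases y; exact Iff.rfl

theorem sg_lf_def (x y : PGame.{u}) :
    sgLF x y ↔ (∃ i, x ≤ sgMoveLeft y i) ∨ ∃ j, sgMoveRight x j ≤ y := by
  cases x; cases y; exact Iff.rfl

theorem sg_lf_of_le_moveLeft {x y : PGame.{u}} (i : sgLeftMoves y) (h : x ≤ sgMoveLeft y i) :
    sgLF x y := (sg_lf_def x y).2 (Or.inl ⟨i, h⟩)

theorem sg_lf_of_moveRight_le {x y : PGame.{u}} (j : sgRightMoves x) (h : sgMoveRight x j ≤ y) :
    sgLF x y := (sg_lf_def x y).2 (Or.inr ⟨j, h⟩)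

theorem sg_equiv_iff {x y : PGame.{u}} : x ≈ y ↔ x ≤ y ∧ y ≤ x := Iff.rfl

theorem sg_le_refl (x : PGame.{u}) : x ≤ x := by
  induction x with
  | mk xl xr xL xR IHl IHr =>
    rw [sg_le_def]
    exact ⟨fun i => sg_lf_of_le_moveLeft i (IHl i), fun j => sg_lf_of_moveRight_le j (IHr j)⟩

theorem sg_lf_iff_aux (x y : PGame.{u}) : (sgLF x y ↔ ¬ y ≤ x) ∧ (sgLF y x ↔ ¬ x ≤ y) := by
  induction x generalizing y with
  | mk xl xr xL xR IHxl IHxr =>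
  induction y with
  | mk yl yr yL yR IHyl IHyr =>
  constructor
  · have h1 : ∀ i, sgLF (yL i) (mk xl xr xL xR) ↔ ¬ mk xl xr xL xR ≤ yL i :=
      fun i => (IHyl i).2
    have h2 : ∀ j, sgLF (mk yl yr yL yR) (xR j) ↔ ¬ xR j ≤ mk yl yr yL yR :=
      fun j => (IHxr j _).2
    rw [sg_lf_def, sg_le_def, not_and_or, not_forall, not_forall]
    exact or_congr (exists_congr fun i => ((h1 i).not.trans not_not).symm)
      (exists_congr fun j => ((h2 j).not.trans not_not).symm)
  · have h1 : ∀ i, sgLF (xL i) (mk yl yr yL yR) ↔ ¬ mk yl yr yL yR ≤ xL i :=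
      fun i => (IHxl i _).1
    have h2 : ∀ j, sgLF (mk xl xr xL xR) (yR j) ↔ ¬ yR j ≤ mk xl xr xL xR :=
      fun j => (IHyr j).1
    rw [sg_lf_def, sg_le_def, not_and_or, not_forall, not_forall]
    exact or_congr (exists_congr fun i => ((h1 i).not.trans not_not).symm)
      (exists_congr fun j => ((h2 j).not.trans not_not).symm)

theorem sg_lf_iff (x y : PGame.{u}) : sgLF x y ↔ ¬ y ≤ x := (sg_lf_iff_aux x y).1

theorem sg_le_trans_aux (x y z : PGame.{u}) :
    (x ≤ y → y ≤ z → x ≤ z) ∧ (y ≤ z → z ≤ x → y ≤ x) ∧ (z ≤ x → x ≤ y → z ≤ y) := by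
  induction x generalizing y z with
  | mk xl xr xL xR IHxl IHxr =>
  induction y generalizing z with
  | mk yl yr yL yR IHyl IHyr =>
  induction z with
  | mk zl zr zL zR IHzl IHzr =>
  refine ⟨fun hxy hyz => ?_, fun hyz hzx => ?_, fun hzx hxy => ?_⟩
  · rw [sg_le_def]
    refine ⟨fun i => ?_, fun j => ?_⟩
    · rw [sg_lf_iff]; intro h
      exact (sg_lf_iff _ _).1 (((sg_le_def _ _).1 hxy).1 i) ((IHxl i _ _).2.1 hyz h)
    · rw [sg_lf_iff]; intro h
      exact (sg_lf_iff _ _).1 (((sg_le_def _ _).1 hyz).2 j) ((IHzr j).2.2 h hxy)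
  · rw [sg_le_def]
    refine ⟨fun i => ?_, fun j => ?_⟩
    · rw [sg_lf_iff]; intro h
      exact (sg_lf_iff _ _).1 (((sg_le_def _ _).1 hyz).1 i) ((IHyl i _).2.2 hzx h)
    · rw [sg_lf_iff]; intro h
      exact (sg_lf_iff _ _).1 (((sg_le_def _ _).1 hzx).2 j) ((IHxr j _ _).1 h hyz)
  · rw [sg_le_def]
    refine ⟨fun i => ?_, fun j => ?_⟩
    · rw [sg_lf_iff]; intro h
      exact (sg_lf_iff _ _).1 (((sg_le_def _ _).1 hzx).1 i) ((IHzl i).1 hxy h)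
    · rw [sg_lf_iff]; intro h
      exact (sg_lf_iff _ _).1 (((sg_le_def _ _).1 hxy).2 j) ((IHyr j _).2.1 h hzx)

theorem sg_le_trans {x y z : PGame.{u}} (h1 : x ≤ y) (h2 : y ≤ z) : x ≤ z :=
  (sg_le_trans_aux x y z).1 h1 h2

theorem sg_equiv_trans {x y z : PGame.{u}} (h1 : x ≈ y) (h2 : y ≈ z) : x ≈ z :=
  sg_equiv_iff.2 ⟨sg_le_trans (sg_equiv_iff.1 h1).1 (sg_equiv_iff.1 h2).1,
    sg_le_trans (sg_equiv_iff.1 h2).2 (sg_equiv_iff.1 h1).2⟩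

theorem sg_equiv_symm {x y : PGame.{u}} (h : x ≈ y) : y ≈ x :=
  sg_equiv_iff.2 ⟨(sg_equiv_iff.1 h).2, (sg_equiv_iff.1 h).1⟩

theorem sg_neg_mk (l r : Type u) (L : l → PGame.{u}) (R : r → PGame.{u}) :
    -(mk l r L R) = mk r l (fun i => -(R i)) (fun i => -(L i)) := rfl

theorem sg_neg_aux (x y : PGame.{u}) : (x ≤ y → -y ≤ -x) ∧ (sgLF x y → sgLF (-y) (-x)) := by
  induction x generalizing y with
  | mk xl xr xL xR IHxl IHxr =>
  induction y with
  | mk yl yr yL yR IHyl IHyr =>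
  simp only [sg_neg_mk]
  constructor
  · intro h
    rw [sg_le_def]
    refine ⟨fun j => ?_, fun i => ?_⟩
    · have := (IHyr j).2 (((sg_le_def _ _).1 h).2 j)
      rw [sg_neg_mk] at this
      exact this
    · have := (IHxl i _).2 (((sg_le_def _ _).1 h).1 i)
      rw [sg_neg_mk] at this
      exact this
  · intro h
    rcases (sg_lf_def _ _).1 h with ⟨i, hi⟩ | ⟨j, hj⟩
    · have := (IHyl i).1 hi
      rw [sg_neg_mk] at this
      exact sg_lf_of_moveRight_le (x := mk yr yl (fun i => -(yR i)) (fun i => -(yL i))) i this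
    · have := (IHxr j _).1 hj
      rw [sg_neg_mk] at this
      exact sg_lf_of_le_moveLeft (y := mk xr xl (fun i => -(xR i)) (fun i => -(xL i))) j this

theorem sg_nim_def (o : Ordinal.{u}) : nim o = mk o.ToType o.ToType
    (fun x => nim (Ordinal.ToType.mk.symm x).val) (fun x => nim (Ordinal.ToType.mk.symm x).val) := by
  rw [nim]

theorem sg_neg_nim (o : Ordinal.{u}) : -(nim o) = nim o := by
  induction o using WellFoundedLT.induction with
  | _ o IH =>
    rw [sg_nim_def, sg_neg_mk]
    congr 1 <;> funext x <;> exact IH _ (Ordinal.ToType.mk.symm x).prop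

theorem sg_nim_moveLeft_exists (o a : Ordinal.{u}) (h : a < o) :
    ∃ x : sgLeftMoves (nim o), sgMoveLeft (nim o) x = nim a := by
  rw [sg_nim_def]
  exact ⟨Ordinal.ToType.mk ⟨a, h⟩, by simp [sgMoveLeft]⟩

theorem sg_nim_moveRight_exists (o a : Ordinal.{u}) (h : a < o) :
    ∃ x : sgRightMoves (nim o), sgMoveRight (nim o) x = nim a := by
  rw [sg_nim_def]
  exact ⟨Ordinal.ToType.mk ⟨a, h⟩, by simp [sgMoveRight]⟩

theorem sg_nim_moveRight_cases (o : Ordinal.{u}) (j : sgRightMoves (nim o)) :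
    ∃ a < o, sgMoveRight (nim o) j = nim a := by
  revert j
  rw [sg_nim_def]
  intro j
  exact ⟨_, (Ordinal.ToType.mk.symm j).prop, rfl⟩

theorem sg_add_aux (x y z : PGame.{u}) :
    (x ≤ y → x + z ≤ y + z) ∧ (sgLF x y → sgLF (x + z) (y + z)) := by
  induction x generalizing y z with
  | mk xl xr xL xR IHxl IHxr =>
  induction y generalizing z with
  | mk yl yr yL yR IHyl IHyr =>
  induction z with
  | mk zl zr zL zR IHzl IHzr =>
  constructor
  · intro h
    rw [sg_le_def]
    refine ⟨fun i => ?_, fun j => ?_⟩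
    · rcases i with i | k
      · exact (IHxl i _ _).2 (((sg_le_def _ _).1 h).1 i)
      · exact sg_lf_of_le_moveLeft (y := mk yl yr yL yR + mk zl zr zL zR) (Sum.inr k)
          ((IHzl k).1 h)
    · rcases j with j | k
      · exact (IHyr j _).2 (((sg_le_def _ _).1 h).2 j)
      · exact sg_lf_of_moveRight_le (x := mk xl xr xL xR + mk zl zr zL zR) (Sum.inr k)
          ((IHzr k).1 h)
  · intro h
    rcases (sg_lf_def _ _).1 h with ⟨i, hi⟩ | ⟨j, hj⟩
    · exact sg_lf_of_le_moveLeft (y := mk yl yr yL yR + mk zl zr zL zR) (Sum.inl i)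
        ((IHyl i _).1 hi)
    · exact sg_lf_of_moveRight_le (x := mk xl xr xL xR + mk zl zr zL zR) (Sum.inl j)
        ((IHxr j _ _).1 hj)

theorem sg_add_congr {x y : PGame.{u}} (z : PGame.{u}) (h : x ≈ y) : x + z ≈ y + z :=
  sg_equiv_iff.2 ⟨(sg_add_aux x y z).1 (sg_equiv_iff.1 h).1,
    (sg_add_aux y x z).1 (sg_equiv_iff.1 h).2⟩

theorem sg_impartialAux_equiv (x : PGame.{u}) (h : ImpartialAux x) : x ≈ -x := by
  cases x
  exact h.1

theorem sg_main (G : PGame.{u}) (hs : Short G) :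
    ImpartialAux G → ∃ n : ℕ, G ≈ nim (n : Ordinal.{u}) := by
  induction hs with
  | @mk α β L R hL hR fα fβ dα dβ ihL ihR =>
  intro hG
  have hG' : (mk α β L R ≈ -mk α β L R) ∧ (∀ i, ImpartialAux (L i)) ∧
      ∀ j, ImpartialAux (R j) := hG
  obtain ⟨hGe, hLi, -⟩ := hG'
  choose g hg using fun i => ihL i (hLi i)
  set S : Finset ℕ := Finset.univ.image g with hS
  have hex : ∃ n, n ∉ S := by
    refine ⟨S.sup id + 1, fun hm => ?_⟩
    have := Finset.le_sup (f := id) hm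
    exact Nat.not_succ_le_self _ this
  set n := Nat.find hex with hn
  have hnS : n ∉ S := Nat.find_spec hex
  have hlt : ∀ k < n, k ∈ S := fun k hk => not_not.1 (Nat.find_min hex hk)
  have Gle : mk α β L R ≤ nim (n : Ordinal.{u}) := by
    rw [sg_le_def]
    refine ⟨fun i => ?_, fun j => ?_⟩
    · have hne : g i ≠ n := by
        intro he
        apply hnS
        rw [← he, hS]
        exact Finset.mem_image_of_mem g (Finset.mem_univ (show α from i))
      rcases lt_or_gt_of_ne hne with h | h
      · obtain ⟨x, hx⟩ := sg_nim_moveLeft_exists (n : Ordinal.{u}) (g i) (by exact_mod_cast h)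
        apply sg_lf_of_le_moveLeft x
        rw [hx]
        exact (sg_equiv_iff.1 (hg i)).1
      · rw [sg_lf_iff]
        intro hle
        have h1 : nim (n : Ordinal.{u}) ≤ nim (g i : Ordinal.{u}) :=
          sg_le_trans hle (sg_equiv_iff.1 (hg i)).1
        obtain ⟨x, hx⟩ := sg_nim_moveRight_exists (g i : Ordinal.{u}) n (by exact_mod_cast h)
        have h2 : sgLF (nim (g i : Ordinal.{u})) (nim (n : Ordinal.{u})) := by
          apply sg_lf_of_moveRight_le x
          rw [hx]
          exact sg_le_refl _
        exact (sg_lf_iff _ _).1 h2 h1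
    · obtain ⟨a, ha, hja⟩ := sg_nim_moveRight_cases (n : Ordinal.{u}) j
      obtain ⟨k, rfl⟩ := Ordinal.lt_omega0.1 (ha.trans (Ordinal.nat_lt_omega0 n))
      have hk : k < n := by exact_mod_cast ha
      obtain ⟨i, -, hi⟩ := Finset.mem_image.1 (hlt k hk)
      rw [hja, sg_lf_iff]
      intro hle
      have h1 := sg_le_trans hle (sg_equiv_iff.1 hGe).1
      rw [sg_neg_mk] at h1
      have h2 := ((sg_le_def _ _).1 h1).2 i
      apply (sg_lf_iff _ _).1 h2
      have h3 : -(L i) ≤ L i := (sg_equiv_iff.1 (sg_impartialAux_equiv _ (hLi i))).2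
      refine sg_le_trans h3 ?_
      rw [← hi]
      exact (sg_equiv_iff.1 (hg i)).1
  have Gge : nim (n : Ordinal.{u}) ≤ mk α β L R := by
    have h1 := (sg_neg_aux _ _).1 Gle
    rw [sg_neg_nim] at h1
    exact sg_le_trans h1 (sg_equiv_iff.1 hGe).2
  exact ⟨n, sg_equiv_iff.2 ⟨Gle, Gge⟩⟩

end SetTheory.PGame

theorem sprague_grundy (G : PGame) [G.Impartial] [G.Short] :
    ∃ n : ℕ, ∀ (H : PGame) [H.Impartial],
      ((G + H ≈ 0) ↔ (nim (n : Ordinal) + H ≈ 0)) := by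
  obtain ⟨n, hn⟩ := sg_main G inferInstance (Impartial.out : ImpartialAux G)
  refine ⟨n, fun H _ => ?_⟩
  constructor
  · intro hGH
    exact sg_equiv_trans (sg_add_congr H (sg_equiv_symm hn)) hGH
  · intro hGH
    exact sg_equiv_trans (sg_add_congr H hn) hGH
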